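/- arXiv:1509.04863 — 3 statements merged into one kernel-verified Lean document; each statement's English description precedes it below -/
import Mathlib

section
/- Let M divide N, let Φ_M be an M×M circulant matrix, and let Φ = [Φ_M Φ_M ... Φ_M] be the M×N block matrix formed by concatenating N/M copies of Φ_M horizontally. Let t ∈ ℝ^M be nonzero, T = circ([t, 0_{1×(N−M)}]) ∈ ℝ^{N×N}, and T̂ = circ(t) ∈ ℝ^{M×M}. Then for every x ∈ ℝ^N and every index i with 0 ≤ i ≤ M−1, (T̂ Φ x)_i = (Φ T x)_i. -/
/-!
Since `M ∣ N`, reduction modulo `M` is an additive homomorphism `π : ℤ/N → ℤ/M`, and `Φ` is the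
circulant `Φ_M` with its columns pulled back along `π`. Both `T̂ Φ` and `Φ T` then have entries
`∑ g, s g * φ (π l - i - π g)`, where `s` is the zero-padding of `t`: for `Φ T` after substituting
`j = l - g`, for `T̂ Φ` because `t` is the pushforward of `s` along `π`, i.e. `t h` is the sum of `s`
over the fibre `π⁻¹ h`.
-/

open Finset Matrix

namespace Matrix

variable {R G H : Type*} [CommSemiring R] [AddCommGroup G] [Fintype G]
  [AddCommGroup H] [Fintype H] [DecidableEq H]

theorem transpose_circulant_mul_submatrix_comm (π : G →+ H) (φ : H → R) (s : G → R)
    (sHat : H → R) (hs : ∀ h, ∑ g with π g = h, s g = sHat h) :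
    (circulant sHat)ᵀ * (circulant φ)ᵀ.submatrix id π
      = (circulant φ)ᵀ.submatrix id π * (circulant s)ᵀ := by
  ext i l
  simp only [mul_apply, transpose_apply, submatrix_apply, circulant_apply, id]
  calc ∑ k, sHat (k - i) * φ (π l - k)
      = ∑ h, sHat h * φ (π l - i - h) :=
        Fintype.sum_equiv (Equiv.subRight i) _ _ fun k => by simp [sub_sub]
    _ = ∑ h, ∑ g with π g = h, s g * φ (π l - i - π g) := by
        refine Fintype.sum_congr _ _ fun h => ?_
        rw [← hs, sum_mul]
        exact sum_congr rfl fun g hg => by rw [(mem_filter.1 hg).2]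
    _ = ∑ g, s g * φ (π l - i - π g) := sum_fiberwise _ _ _
    _ = ∑ j, φ (π j - i) * s (l - j) :=
        Fintype.sum_equiv (Equiv.subLeft l) _ _ fun g => by
          simp [mul_comm, map_sub, sub_right_comm]

end Matrix

namespace Fin

variable {M N : ℕ} [NeZero M] [NeZero N]

def modAddHom (hdvd : M ∣ N) : Fin N →+ Fin M where
  toFun j := Fin.ofNat M j
  map_zero' := Fin.ext <| by simp
  map_add' a b := Fin.ext <| by
    simp [Fin.val_add, Nat.mod_mod_of_dvd _ hdvd, Nat.add_mod]

theorem sum_fiber_modAddHom_zeroPad {R : Type*} [AddCommMonoid R] (hdvd : M ∣ N)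
    (t : Fin M → R) (h : Fin M) :
    ∑ g with modAddHom hdvd g = h, (if hg : (g : ℕ) < M then t ⟨g, hg⟩ else 0) = t h := by
  have hMN : M ≤ N := Nat.le_of_dvd (Nat.pos_of_neZero N) hdvd
  have hmod : ∀ g : Fin N, (hg : (g : ℕ) < M) → modAddHom hdvd g = ⟨g, hg⟩ := fun _ hg =>
    Fin.ext (Nat.mod_eq_of_lt hg)
  rw [sum_eq_single_of_mem (Fin.castLE hMN h) (by simp [hmod (Fin.castLE hMN h) h.isLt])]
  · simp
  · intro g hg hne
    rw [dif_neg]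
    intro hlt
    have hgh : (⟨g, hlt⟩ : Fin M) = h := (hmod g hlt).symm.trans (mem_filter.1 hg).2
    exact hne (Fin.ext (by simpa [Fin.ext_iff] using hgh))

end Fin

theorem block_circulant_commute_general (N M : ℕ) (hM : 0 < M) (hdvd : M ∣ N)
    (ΦM : Matrix (Fin M) (Fin M) ℝ) (φ : Fin M → ℝ)
    (hΦM : ∀ i j : Fin M, ΦM i j = φ (j - i))
    (t : Fin M → ℝ)
    (T : Matrix (Fin N) (Fin N) ℝ)
    (hT : ∀ i j : Fin N, T i j =
      if h : ((j - i : Fin N) : ℕ) < M then t ⟨((j - i : Fin N) : ℕ), h⟩ else 0)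
    (That : Matrix (Fin M) (Fin M) ℝ)
    (hThat : ∀ i j : Fin M, That i j = t (j - i))
    (Φ : Matrix (Fin M) (Fin N) ℝ)
    (hΦ : ∀ (k : Fin M) (j : Fin N), Φ k j = ΦM k ⟨(j : ℕ) % M, Nat.mod_lt _ hM⟩) :
    ∀ (x : Fin N → ℝ) (i : Fin M),
      That.mulVec (Φ.mulVec x) i = Φ.mulVec (T.mulVec x) i := by
  intro x i
  obtain rfl | hN := N.eq_zero_or_pos
  · simp [mulVec, dotProduct]
  have : NeZero M := ⟨hM.ne'⟩
  have : NeZero N := ⟨hN.ne'⟩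
  have hThat' : That = (circulant t)ᵀ := ext hThat
  have hT' : T = (circulant fun g : Fin N => if h : (g : ℕ) < M then t ⟨g, h⟩ else 0)ᵀ :=
    ext hT
  have hΦ' : Φ = (circulant φ)ᵀ.submatrix id (Fin.modAddHom hdvd) :=
    ext fun k j => (hΦ k j).trans (hΦM _ _)
  rw [mulVec_mulVec, mulVec_mulVec, hThat', hT', hΦ',
    transpose_circulant_mul_submatrix_comm _ _ _ _ (Fin.sum_fiber_modAddHom_zeroPad hdvd t)]

/-- Theorem 2 of the paper: commutation for the block-concatenated circulant sampling matrix. -/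
theorem block_circulant_commute (N M : ℕ) (hM : 0 < M) (hdvd : M ∣ N)
    (ΦM : Matrix (Fin M) (Fin M) ℝ) (φ : Fin M → ℝ)
    (hΦM : ∀ i j : Fin M, ΦM i j = φ (j - i))
    (t : Fin M → ℝ) (ht : t ≠ 0)
    (T : Matrix (Fin N) (Fin N) ℝ)
    (hT : ∀ i j : Fin N, T i j =
      if h : ((j - i : Fin N) : ℕ) < M then t ⟨((j - i : Fin N) : ℕ), h⟩ else 0)
    (That : Matrix (Fin M) (Fin M) ℝ)
    (hThat : ∀ i j : Fin M, That i j = t (j - i))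
    (Φ : Matrix (Fin M) (Fin N) ℝ)
    (hΦ : ∀ (k : Fin M) (j : Fin N), Φ k j = ΦM k ⟨(j : ℕ) % M, Nat.mod_lt _ hM⟩) :
    ∀ (x : Fin N → ℝ) (i : Fin M),
      That.mulVec (Φ.mulVec x) i = Φ.mulVec (T.mulVec x) i :=
  block_circulant_commute_general N M hM hdvd ΦM φ hΦM t T hT That hThat Φ hΦ
end

section
/- Let x ∈ {−1,1}^N have i.i.d. Rademacher entries, fix m, set t_i = x_{(m+i) mod N} for i < K, and (Tx)_k = Σ_{i=0}^{K−1} t_i x_{(k+i) mod N}. Suppose M divides N, L = N/M, and let ỹ_k = Σ_{i=0}^{L−1} (Tx)_{(k+iM) mod N} for 0 ≤ k < M. If k ≡ m (mod M), then E[ỹ_k] = K; assuming additionally that the K-windows indexed by k+iM for distinct i (excluding the one equal to m) are pairwise disjoint and disjoint from the window at m, Var[ỹ_k] = (L−1)·K. -/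
/-!
Each term `X (m + j) * X (k + i M + j)` is a product of two Rademacher variables. The window
`i₀ = m / M` is the one at `m`, so its terms are squares and add up to the constant `K`. Every
other term multiplies two distinct independent variables, so it has mean zero; two such terms are
uncorrelated unless they involve the same pair of indices, since otherwise some index occurs
exactly once among the four factors and independence kills the expectation. Disjointness of the
windows makes all these pairs distinct, so the variance is the number `(L - 1) K` of terms.
-/

open MeasureTheory ProbabilityTheory Finset

section Rademacher

variable {Ω : Type*} [MeasurableSpace Ω]

def IsRademacher (Y : Ω → ℝ) (μ : Measure Ω) : Prop :=
  μ {ω | Y ω = 1} = 1 / 2 ∧ μ {ω | Y ω = -1} = 1 / 2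

variable {μ : Measure Ω}

namespace IsRademacher

variable [IsProbabilityMeasure μ] {Y : Ω → ℝ}

lemma ae_eq_one_or_neg_one (hY : Measurable Y) (h : IsRademacher Y μ) :
    ∀ᵐ ω ∂μ, Y ω = 1 ∨ Y ω = -1 := by
  have hA : MeasurableSet {ω | Y ω = 1} := hY (measurableSet_singleton 1)
  have hB : MeasurableSet {ω | Y ω = -1} := hY (measurableSet_singleton (-1))
  have hdisj : Disjoint {ω | Y ω = 1} {ω | Y ω = -1} :=
    Set.disjoint_left.2 fun ω h1 h2 => by linarith [show Y ω = 1 from h1, show Y ω = -1 from h2]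
  refine mem_ae_iff.2 ((prob_compl_eq_zero_iff (hA.union hB)).2 ?_)
  rw [measure_union hdisj hB, h.1, h.2, ENNReal.add_halves]

lemma ae_mul_self_eq_one (hY : Measurable Y) (h : IsRademacher Y μ) :
    ∀ᵐ ω ∂μ, Y ω * Y ω = 1 := by
  filter_upwards [h.ae_eq_one_or_neg_one hY] with ω hω
  rcases hω with h1 | h1 <;> simp [h1]

lemma ae_abs_le_one (hY : Measurable Y) (h : IsRademacher Y μ) :
    ∀ᵐ ω ∂μ, |Y ω| ≤ 1 := by
  filter_upwards [h.ae_eq_one_or_neg_one hY] with ω hω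
  rcases hω with h1 | h1 <;> simp [h1]

lemma integral_eq_zero (hY : Measurable Y) (h : IsRademacher Y μ) : ∫ ω, Y ω ∂μ = 0 := by
  have hA : MeasurableSet {ω | Y ω = 1} := hY (measurableSet_singleton 1)
  have hB : MeasurableSet {ω | Y ω = -1} := hY (measurableSet_singleton (-1))
  have hsplit : Y =ᵐ[μ] {ω | Y ω = 1}.indicator 1 - {ω | Y ω = -1}.indicator 1 := by
    filter_upwards [h.ae_eq_one_or_neg_one hY] with ω hω
    rcases hω with h1 | h1 <;> norm_num [Set.indicator_apply, h1]
  rw [integral_congr_ae hsplit, integral_sub' ((integrable_const 1).indicator hA)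
    ((integrable_const 1).indicator hB), integral_indicator_one hA, integral_indicator_one hB,
    measureReal_def, measureReal_def, h.1, h.2, sub_self]

end IsRademacher

section Independent

variable {ι : Type*} {X : ι → Ω → ℝ}

lemma integral_mul_prod_eq_zero (hmeas : ∀ i, Measurable (X i)) (hindep : iIndepFun X μ)
    {c : ι} (hc : ∫ ω, X c ω ∂μ = 0) {n : ℕ} (e : Fin n → ι) (he : ∀ k, e k ≠ c) :
    ∫ ω, X c ω * ∏ k, X (e k) ω ∂μ = 0 := by
  classical
  have hdisj : Disjoint {c} (univ.image e) := by simpa using fun k => he k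
  have hind : IndepFun (X c) (fun ω => ∏ k, X (e k) ω) μ :=
    (hindep.indepFun_finset {c} (univ.image e) hdisj hmeas).comp
      (φ := fun v : ({c} : Finset ι) → ℝ => v ⟨c, mem_singleton_self c⟩)
      (ψ := fun v : (Finset.image e univ) → ℝ => ∏ k, v ⟨e k, by simp⟩)
      (measurable_pi_apply _) (Finset.measurable_prod _ fun k _ => measurable_pi_apply _)
  have hprod : Measurable fun ω => ∏ k, X (e k) ω :=
    Finset.measurable_prod _ fun k _ => hmeas (e k)
  rw [← zero_mul (∫ ω, ∏ k, X (e k) ω ∂μ), ← hc]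
  exact hind.integral_mul_eq_mul_integral (hmeas c).aestronglyMeasurable hprod.aestronglyMeasurable

variable [IsProbabilityMeasure μ]

lemma integral_mul_eq_zero_of_ne (hmeas : ∀ i, Measurable (X i)) (hindep : iIndepFun X μ)
    (hrad : ∀ i, IsRademacher (X i) μ) {c d : ι} (hcd : c ≠ d) :
    ∫ ω, X c ω * X d ω ∂μ = 0 := by
  simpa using integral_mul_prod_eq_zero hmeas hindep ((hrad c).integral_eq_zero (hmeas c))
    ![d] (by simp [hcd.symm])

lemma integral_mul_mul_mul_mul_eq_ite [DecidableEq ι] (hmeas : ∀ i, Measurable (X i))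
    (hindep : iIndepFun X μ) (hrad : ∀ i, IsRademacher (X i) μ) {c d c' d' : ι}
    (hcd : c ≠ d) :
    ∫ ω, X c ω * X d ω * (X c' ω * X d' ω) ∂μ = if s(c, d) = s(c', d') then 1 else 0 := by
  have hsq i := (hrad i).ae_mul_self_eq_one (hmeas i)
  have hzero i := (hrad i).integral_eq_zero (hmeas i)
  split_ifs with h
  · have hone : ∀ᵐ ω ∂μ, X c ω * X d ω * (X c' ω * X d' ω) = 1 := by
      filter_upwards [hsq c, hsq d] with ω hc hd
      rcases Sym2.eq_iff.1 h with ⟨rfl, rfl⟩ | ⟨rfl, rfl⟩ <;>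
        linear_combination (X d ω * X d ω) * hc + hd
    simp [integral_congr_ae hone]
  · by_cases hc : c = c' ∨ c = d'
    · have hd' : d ≠ c' ∧ d ≠ d' := by
        rcases hc with rfl | rfl <;> refine ⟨?_, ?_⟩ <;> rintro rfl <;> simp_all [Sym2.eq_swap]
      have hd : ∀ k, ![c, c', d'] k ≠ d := by
        intro k; fin_cases k <;> simp [hcd, hd'.1.symm, hd'.2.symm]
      rw [← integral_mul_prod_eq_zero hmeas hindep (hzero d) _ hd]
      congr 1 with ω
      simp [Fin.prod_univ_three]
      ring
    · have hc' : ∀ k, ![d, c', d'] k ≠ c := by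
        push Not at hc
        intro k; fin_cases k <;> simp [hcd.symm, hc.1.symm, hc.2.symm]
      rw [← integral_mul_prod_eq_zero hmeas hindep (hzero c) _ hc']
      congr 1 with ω
      simp [Fin.prod_univ_three]
      ring

lemma memLp_mul (hmeas : ∀ i, Measurable (X i)) (hrad : ∀ i, IsRademacher (X i) μ) (c d : ι) :
    MemLp (fun ω => X c ω * X d ω) 2 μ := by
  refine MemLp.of_bound ((hmeas c).mul (hmeas d)).aestronglyMeasurable 1 ?_
  filter_upwards [(hrad c).ae_abs_le_one (hmeas c), (hrad d).ae_abs_le_one (hmeas d)] with ω hc hd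
  rw [Real.norm_eq_abs, abs_mul]
  exact mul_le_one₀ hc (abs_nonneg _) hd

variable {P : Type*} {s : Finset P} {c d : P → ι}

lemma integral_sum_mul_eq_zero (hmeas : ∀ i, Measurable (X i)) (hindep : iIndepFun X μ)
    (hrad : ∀ i, IsRademacher (X i) μ) (hcd : ∀ p ∈ s, c p ≠ d p) :
    ∫ ω, ∑ p ∈ s, X (c p) ω * X (d p) ω ∂μ = 0 := by
  rw [integral_finsetSum _ fun p _ => (memLp_mul hmeas hrad _ _).integrable one_le_two]
  exact sum_eq_zero fun p hp => integral_mul_eq_zero_of_ne hmeas hindep hrad (hcd p hp)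

lemma variance_sum_mul_eq_card (hmeas : ∀ i, Measurable (X i)) (hindep : iIndepFun X μ)
    (hrad : ∀ i, IsRademacher (X i) μ) (hcd : ∀ p ∈ s, c p ≠ d p)
    (hinj : Set.InjOn (fun p => s(c p, d p)) s) :
    Var[fun ω => ∑ p ∈ s, X (c p) ω * X (d p) ω; μ] = #s := by
  classical
  have hcov : ∀ p ∈ s, ∀ q ∈ s, cov[fun ω => X (c p) ω * X (d p) ω,
      fun ω => X (c q) ω * X (d q) ω; μ] = if p = q then 1 else 0 := by
    intro p hp q hq
    rw [covariance_eq_sub (memLp_mul hmeas hrad _ _) (memLp_mul hmeas hrad _ _)]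
    simp only [Pi.mul_apply, integral_mul_mul_mul_mul_eq_ite hmeas hindep hrad (hcd p hp),
      integral_mul_eq_zero_of_ne hmeas hindep hrad (hcd p hp), zero_mul, sub_zero]
    exact if_congr (hinj.eq_iff hp hq) rfl rfl
  rw [variance_fun_sum' fun p _ => memLp_mul hmeas hrad _ _]
  rw [sum_congr rfl fun p hp => sum_congr rfl fun q hq => hcov p hp q hq]
  simp

theorem integral_and_variance_sum_windows {K L : ℕ} (hmeas : ∀ i, Measurable (X i))
    (hindep : iIndepFun X μ) (hrad : ∀ i, IsRademacher (X i) μ)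
    (a : Fin K → ι) (b : Fin L → Fin K → ι) (i₀ : Fin L) (ha : Function.Injective a)
    (hb₀ : ∀ j, b i₀ j = a j) (hab : ∀ i ≠ i₀, ∀ j j', a j ≠ b i j')
    (hbb : ∀ i i', i ≠ i' → ∀ j j', b i j ≠ b i' j') :
    ∫ ω, ∑ i, ∑ j, X (a j) ω * X (b i j) ω ∂μ = K ∧
      Var[fun ω => ∑ i, ∑ j, X (a j) ω * X (b i j) ω; μ] = (L - 1) * K := by
  classical
  set S := (univ.erase i₀) ×ˢ (univ : Finset (Fin K))
  have hsplit : (fun ω => ∑ i, ∑ j, X (a j) ω * X (b i j) ω) =ᵐ[μ]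
      fun ω => K + ∑ p ∈ S, X (a p.2) ω * X (b p.1 p.2) ω := by
    filter_upwards [ae_all_iff.2 fun j => (hrad (a j)).ae_mul_self_eq_one (hmeas (a j))]
      with ω hω
    rw [← add_sum_erase _ _ (mem_univ i₀), sum_product]
    simp [hb₀, hω]
  have hne : ∀ p ∈ S, a p.2 ≠ b p.1 p.2 := fun p hp =>
    hab _ (mem_erase.1 (mem_product.1 hp).1).1 _ _
  have hinj : Set.InjOn (fun p : Fin L × Fin K => s(a p.2, b p.1 p.2)) S := by
    rintro ⟨i, j⟩ hp ⟨i', j'⟩ hq h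
    rcases Sym2.eq_iff.1 h with ⟨hj, hi⟩ | ⟨h, -⟩
    · obtain rfl := ha hj
      obtain rfl : i = i' := by_contra fun hii => hbb i i' hii j j hi
      rfl
    · exact absurd h (hab i' (mem_erase.1 (mem_product.1 hq).1).1 j j')
  have hsum : MemLp (fun ω => ∑ p ∈ S, X (a p.2) ω * X (b p.1 p.2) ω) 2 μ :=
    memLp_finsetSum _ fun p _ => memLp_mul hmeas hrad _ _
  constructor
  · rw [integral_congr_ae hsplit, integral_add (integrable_const _)
      (hsum.integrable one_le_two), integral_sum_mul_eq_zero hmeas hindep hrad hne]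
    simp
  · rw [variance_congr hsplit, variance_const_add hsum.aestronglyMeasurable,
      variance_sum_mul_eq_card hmeas hindep hrad hne hinj]
    simp [S, card_erase_of_mem, Nat.cast_sub (Fin.pos i₀)]

end Independent

end Rademacher

lemma Nat.eq_of_add_mod_eq_add_mod {N s j j' : ℕ} (hj : j < N) (hj' : j' < N)
    (h : (s + j) % N = (s + j') % N) : j = j' := by
  have := Nat.ModEq.add_left_cancel' s h
  rwa [Nat.ModEq, Nat.mod_eq_of_lt hj, Nat.mod_eq_of_lt hj'] at this

lemma Nat.mod_add_mul_mod_ne {M L m i : ℕ} (hm : m < M * L) (hi : i < L) (hne : i ≠ m / M) :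
    (m % M + i * M) % (M * L) ≠ m := by
  have hM : 0 < M := Nat.pos_of_mul_pos_right (Nat.zero_lt_of_lt hm)
  have hlt : m % M + i * M < M * L := by
    have := Nat.mod_lt m hM
    nlinarith
  rw [Nat.mod_eq_of_lt hlt]
  intro h
  apply hne
  rw [← h, Nat.add_mul_div_right _ _ hM, Nat.div_eq_of_lt (Nat.mod_lt m hM), zero_add]

/-- Mean and variance of the aggregated correlation at the correct residue class:
E[ỹ_k] = K, and under pairwise disjointness of the windows, Var[ỹ_k] = (L-1)K. -/
theorem aggregated_mean_variance
    (Ω : Type*) [MeasurableSpace Ω] (μ : Measure Ω) [IsProbabilityMeasure μ]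
    (N M K L : ℕ) (hN : 0 < N) (hNM : N = M * L) (hKM : K ≤ M)
    (X : Fin N → Ω → ℝ)
    (hmeas : ∀ i, Measurable (X i))
    (hindep : iIndepFun X μ)
    (hrad : ∀ i, μ {ω | X i ω = 1} = 1/2 ∧ μ {ω | X i ω = -1} = 1/2)
    (m : Fin N) (k : Fin M) (hk : (k : ℕ) = (m : ℕ) % M)
    (hpair : ∀ i i' : Fin L, i ≠ i' → ∀ j j' : Fin K,
      ((k : ℕ) + (i : ℕ) * M + j) % N ≠ ((k : ℕ) + (i' : ℕ) * M + j') % N)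
    (hdm : ∀ i : Fin L, ((k : ℕ) + (i : ℕ) * M) % N ≠ (m : ℕ) →
      ∀ j j' : Fin K, ((m : ℕ) + j) % N ≠ ((k : ℕ) + (i : ℕ) * M + j') % N) :
    (∫ ω, (∑ i : Fin L, ∑ j : Fin K,
        X ⟨((m : ℕ) + j) % N, Nat.mod_lt _ hN⟩ ω *
        X ⟨((k : ℕ) + (i : ℕ) * M + j) % N, Nat.mod_lt _ hN⟩ ω) ∂μ) = (K : ℝ) ∧
    variance (fun ω => ∑ i : Fin L, ∑ j : Fin K,
        X ⟨((m : ℕ) + j) % N, Nat.mod_lt _ hN⟩ ω *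
        X ⟨((k : ℕ) + (i : ℕ) * M + j) % N, Nat.mod_lt _ hN⟩ ω) μ
      = ((L : ℝ) - 1) * (K : ℝ) := by
  subst hNM
  have hKN : K ≤ M * L := hKM.trans (Nat.le_mul_of_pos_right M (Nat.pos_of_mul_pos_left hN))
  refine integral_and_variance_sum_windows hmeas hindep hrad
    (fun j => ⟨((m : ℕ) + j) % (M * L), Nat.mod_lt _ hN⟩)
    (fun i j => ⟨((k : ℕ) + (i : ℕ) * M + j) % (M * L), Nat.mod_lt _ hN⟩)
    ⟨m / M, Nat.div_lt_of_lt_mul m.isLt⟩ ?_ ?_ ?_ ?_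
  · intro j j' h
    exact Fin.ext (Nat.eq_of_add_mod_eq_add_mod (j.isLt.trans_le hKN) (j'.isLt.trans_le hKN)
      (Fin.val_eq_of_eq h))
  · intro j
    simp [hk, Nat.mod_add_div']
  · intro i hi j j' h
    refine hdm i ?_ j j' (Fin.val_eq_of_eq h)
    rw [hk]
    exact Nat.mod_add_mul_mod_ne m.isLt i.isLt fun h => hi (Fin.ext h)
  · intro i i' hii j j' h
    exact hpair i i' hii j j' (Fin.val_eq_of_eq h)
end

section
/- For t ∈ ℝ^K nonzero, K ≤ M ≤ N, let T = circ([t, 0_{1×(N−K)}]) ∈ ℝ^{N×N}, T̂ = circ([t, 0_{1×(M−K)}]) ∈ ℝ^{M×M}, and let Φ be the M×N matrix consisting of the first M rows of an N×N circulant matrix. Then for every x ∈ ℝ^N and every index i with 0 ≤ i ≤ M−K, (T̂Φx)_i = (ΦTx)_i. -/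
/-! Embed `Φ` as the first `M` rows of the full circulant `C`, `C k j = φ (j - k)`. Circulant
matrices commute, so `Φ T x` is row `i` of `T C x`. Row `i` of a banded circulant with band `t`
only reads the `K` entries `i, …, i + K - 1`, and for `i ≤ M - K` these do not wrap around modulo
`M`; there `C x` agrees with `Φ x`, which is what `T̂` reads. -/

open Matrix Finset

variable {R : Type*}

theorem Fin.castLE_add_of_val_add_lt {m n : ℕ} (h : m ≤ n) (a b : Fin m)
    (hab : (a : ℕ) + b < m) : Fin.castLE h (a + b) = Fin.castLE h a + Fin.castLE h b := by
  ext
  simp [Fin.val_add, Nat.mod_eq_of_lt hab, Nat.mod_eq_of_lt (hab.trans_le h)]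

namespace Matrix

theorem commute_of_apply_eq_sub [CommSemiring R] {ι : Type*} [Fintype ι] [AddCommGroup ι]
    {A B : Matrix ι ι R} {a b : ι → R}
    (hA : ∀ i j, A i j = a (j - i)) (hB : ∀ i j, B i j = b (j - i)) : Commute A B := by
  have hcirc : ∀ {C : Matrix ι ι R} {c : ι → R}, (∀ i j, C i j = c (j - i)) →
      C = circulant fun m => c (-m) := fun hC => by
    ext i j
    rw [hC, circulant_apply, neg_sub]
  rw [hcirc hA, hcirc hB]
  exact circulant_mul_comm _ _

theorem mulVec_apply_eq_sum_of_band [NonUnitalNonAssocSemiring R] {n K : ℕ} [NeZero n]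
    (hK : K ≤ n) (t : Fin K → R) {A : Matrix (Fin n) (Fin n) R}
    (hA : ∀ i j : Fin n, A i j =
      if h : ((j - i : Fin n) : ℕ) < K then t ⟨((j - i : Fin n) : ℕ), h⟩ else 0)
    (v : Fin n → R) (i : Fin n) :
    (A *ᵥ v) i = ∑ d : Fin K, t d * v (i + Fin.castLE hK d) := by
  simp only [mulVec, dotProduct, hA]
  rw [← Equiv.sum_comp (Equiv.addLeft i)]
  simp only [Equiv.coe_addLeft, add_sub_cancel_left]
  refine (sum_of_injOn (Fin.castLE hK) (Fin.castLE_injective hK).injOn (by simp) ?_ ?_).symm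
  · intro e _ he
    have hlarge : ¬ (e : ℕ) < K := fun hlt => he ⟨⟨e, hlt⟩, by simp, rfl⟩
    simp [hlarge]
  · intro d _
    simp

end Matrix

theorem partial_circulant_commute_general
    (N M K : ℕ) (hKM : K ≤ M) (hMN : M ≤ N)
    (t : Fin K → ℝ)
    (T : Matrix (Fin N) (Fin N) ℝ)
    (hT : ∀ i j : Fin N, T i j =
      if h : ((j - i : Fin N) : ℕ) < K then t ⟨((j - i : Fin N) : ℕ), h⟩ else 0)
    (That : Matrix (Fin M) (Fin M) ℝ)
    (hThat : ∀ i j : Fin M, That i j =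
      if h : ((j - i : Fin M) : ℕ) < K then t ⟨((j - i : Fin M) : ℕ), h⟩ else 0)
    (φ : Fin N → ℝ)
    (Φ : Matrix (Fin M) (Fin N) ℝ)
    (hΦ : ∀ (k : Fin M) (j : Fin N), Φ k j = φ (j - ⟨(k : ℕ), lt_of_lt_of_le k.isLt hMN⟩)) :
    ∀ (x : Fin N → ℝ) (i : Fin M), (i : ℕ) ≤ M - K →
      That.mulVec (Φ.mulVec x) i = Φ.mulVec (T.mulVec x) i := by
  intro x i hi
  have : NeZero M := ⟨i.pos.ne'⟩
  have : NeZero N := ⟨(i.pos.trans_le hMN).ne'⟩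
  let C : Matrix (Fin N) (Fin N) ℝ := fun k j => φ (j - k)
  have hΦC : ∀ v k, (Φ *ᵥ v) k = (C *ᵥ v) (Fin.castLE hMN k) := fun v k => by
    simp only [mulVec, dotProduct, hΦ]
    rfl
  have hTC : Commute T C :=
    commute_of_apply_eq_sub (a := fun m => if h : (m : ℕ) < K then t ⟨m, h⟩ else 0) hT
      fun _ _ => rfl
  calc (That *ᵥ (Φ *ᵥ x)) i
      = ∑ d : Fin K, t d * (Φ *ᵥ x) (i + Fin.castLE hKM d) :=
        mulVec_apply_eq_sum_of_band hKM t hThat _ i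
    _ = ∑ d : Fin K, t d * (C *ᵥ x) (Fin.castLE hMN i + Fin.castLE (hKM.trans hMN) d) := by
        refine sum_congr rfl fun d _ => ?_
        rw [hΦC, Fin.castLE_add_of_val_add_lt hMN _ _ (by rw [Fin.val_castLE]; omega), Fin.castLE_castLE]
    _ = (T *ᵥ (C *ᵥ x)) (Fin.castLE hMN i) :=
        (mulVec_apply_eq_sum_of_band (hKM.trans hMN) t hT _ _).symm
    _ = (Φ *ᵥ (T *ᵥ x)) i := by
        rw [hΦC, mulVec_mulVec, hTC.eq, ← mulVec_mulVec]

/-- Valsesia–Magli (Theorem 1, 'if' direction): a partial circulant measurement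
matrix commutes with circulant filtering on the first M-K+1 coordinates. -/
theorem partial_circulant_commute
    (N M K : ℕ) (hN : 0 < N) (hKM : K ≤ M) (hMN : M ≤ N)
    (t : Fin K → ℝ) (ht : t ≠ 0)
    (T : Matrix (Fin N) (Fin N) ℝ)
    (hT : ∀ i j : Fin N, T i j =
      if h : ((j - i : Fin N) : ℕ) < K then t ⟨((j - i : Fin N) : ℕ), h⟩ else 0)
    (That : Matrix (Fin M) (Fin M) ℝ)
    (hThat : ∀ i j : Fin M, That i j =
      if h : ((j - i : Fin M) : ℕ) < K then t ⟨((j - i : Fin M) : ℕ), h⟩ else 0)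
    (φ : Fin N → ℝ)
    (Φ : Matrix (Fin M) (Fin N) ℝ)
    (hΦ : ∀ (k : Fin M) (j : Fin N), Φ k j = φ (j - ⟨(k : ℕ), lt_of_lt_of_le k.isLt hMN⟩)) :
    ∀ (x : Fin N → ℝ) (i : Fin M), (i : ℕ) ≤ M - K →
      That.mulVec (Φ.mulVec x) i = Φ.mulVec (T.mulVec x) i :=
  partial_circulant_commute_general N M K hKM hMN t T hT That hThat φ Φ hΦ
end
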